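/- Assume the function φ(t) = μ({x ∈ D : b(x) < t}) is continuous on ℝ. Then there exists k ≥ 0 with μ({x ∈ D : b(x) > k}) = μ(D) − m such that, with B = {x ∈ D : b(x) > k}, the function w*(x) = (b(x)/‖b‖_{L²(B)}) 1_B(x) is a solution of the functional sparse clustering problem: w* is feasible and ∫_D w* b dμ ≥ ∫_D g b dμ for every feasible g. -/

import Mathlib

/-!
The distribution function `φ t = μ {b < t}` vanishes at `0` and equals `μ D` above `max b`, so
the intermediate value theorem gives `k ≥ 0` with `φ k = m`; continuity of `φ` at `k` upgrades
this to `μ {b ≤ k} = m`, hence `B = {b > k}` has measure `μ D - m`, `w*` is feasible, and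
`∫ w* b = ‖b‖_{L²(B)}`. A feasible `g` is supported on a set `A` with `μ A ≤ μ D - m = μ B`.
Cauchy–Schwarz gives `∫ g b ≤ ‖b‖_{L²(A)}`, and `∫_A b² ≤ ∫_B b²` by the bathtub principle:
`b² ≤ k²` on `A \ B`, `b² > k²` on `B \ A`, and `μ (A \ B) ≤ μ (B \ A)`.
-/

open MeasureTheory
open scoped ENNReal

noncomputable section

/-- A function `w` is feasible for the functional sparse clustering problem on `D` if
`w ∈ L²(D)`, `‖w‖_{L²(D)} ≤ 1`, `w ≥ 0` μ-a.e. on `D`, and `μ({x ∈ D : w(x) = 0}) ≥ m`. -/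
def FeasibleF (D : Set ℝ) (m : ℝ) (w : ℝ → ℝ) : Prop :=
  MemLp w 2 (volume.restrict D) ∧
  (∫ x in D, (w x) ^ 2) ≤ 1 ∧
  (∀ᵐ x ∂(volume.restrict D), 0 ≤ w x) ∧
  ENNReal.ofReal m ≤ volume {x ∈ D | w x = 0}

/-- The set `B = {x ∈ D : b(x) > k}`. -/
def Bf (D : Set ℝ) (b : ℝ → ℝ) (k : ℝ) : Set ℝ := {x ∈ D | k < b x}

/-- The candidate optimal weighting function `w*(x) = (b(x)/‖b‖_{L²(B)}) 1_B(x)`. -/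
def wstarF (D : Set ℝ) (b : ℝ → ℝ) (k : ℝ) : ℝ → ℝ :=
  (Bf D b k).indicator fun x => b x / Real.sqrt (∫ y in Bf D b k, (b y) ^ 2)

open Set Filter Topology

namespace MeasureTheory

variable {α : Type*} [MeasurableSpace α] {μ : Measure α}

theorem measure_sdiff_le_measure_sdiff {A B : Set α} (hA : NullMeasurableSet A μ)
    (hB : NullMeasurableSet B μ) (hAB : μ A ≤ μ B) (hfin : μ (A ∩ B) ≠ ∞) :
    μ (A \ B) ≤ μ (B \ A) := by
  rw [← ENNReal.add_le_add_iff_left hfin, measure_inter_add_sdiff₀ _ hB, inter_comm,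
    measure_inter_add_sdiff₀ _ hA]
  exact hAB

theorem setIntegral_le_setIntegral_of_measure_le {A B : Set α} {f : α → ℝ} {c : ℝ}
    (hA : MeasurableSet A) (hB : MeasurableSet B) (hB_fin : μ B ≠ ∞) (hAB : μ A ≤ μ B)
    (hfA : IntegrableOn f A μ) (hfB : IntegrableOn f B μ) (hc : 0 ≤ c)
    (hle : ∀ᵐ x ∂μ.restrict (A \ B), f x ≤ c) (hge : ∀ᵐ x ∂μ.restrict (B \ A), c ≤ f x) :
    ∫ x in A, f x ∂μ ≤ ∫ x in B, f x ∂μ := by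
  have hA_fin : μ A ≠ ∞ := (hAB.trans_lt hB_fin.lt_top).ne
  have hAB_fin : μ (A \ B) ≠ ∞ := measure_ne_top_of_subset sdiff_subset hA_fin
  have hBA_fin : μ (B \ A) ≠ ∞ := measure_ne_top_of_subset sdiff_subset hB_fin
  have hwings : ∫ x in A \ B, f x ∂μ ≤ ∫ x in B \ A, f x ∂μ :=
    calc ∫ x in A \ B, f x ∂μ ≤ ∫ _ in A \ B, c ∂μ :=
          integral_mono_ae (hfA.mono_set sdiff_subset) (integrableOn_const hAB_fin) hle
      _ = μ.real (A \ B) * c := by rw [setIntegral_const, smul_eq_mul]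
      _ ≤ μ.real (B \ A) * c := by
          refine mul_le_mul_of_nonneg_right (ENNReal.toReal_mono hBA_fin ?_) hc
          exact measure_sdiff_le_measure_sdiff hA.nullMeasurableSet hB.nullMeasurableSet hAB
            (measure_ne_top_of_subset inter_subset_left hA_fin)
      _ = ∫ _ in B \ A, c ∂μ := by rw [setIntegral_const, smul_eq_mul]
      _ ≤ ∫ x in B \ A, f x ∂μ :=
          integral_mono_ae (integrableOn_const hBA_fin) (hfB.mono_set sdiff_subset) hge
  have hsplitA := integral_inter_add_sdiff hB hfA
  have hsplitB := integral_inter_add_sdiff hA hfB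
  rw [inter_comm] at hsplitB
  linarith

theorem integral_mul_le_sqrt_mul_sqrt {f g : α → ℝ} (hf₀ : 0 ≤ᵐ[μ] f) (hg₀ : 0 ≤ᵐ[μ] g)
    (hf : MemLp f 2 μ) (hg : MemLp g 2 μ) :
    ∫ x, f x * g x ∂μ ≤ √(∫ x, f x ^ 2 ∂μ) * √(∫ x, g x ^ 2 ∂μ) := by
  have h := integral_mul_le_Lp_mul_Lq_of_nonneg Real.HolderConjugate.two_two hf₀ hg₀
    (by rwa [ENNReal.ofReal_ofNat]) (by rwa [ENNReal.ofReal_ofNat])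
  rw [Real.sqrt_eq_rpow, Real.sqrt_eq_rpow]
  simpa only [Real.rpow_two] using h

theorem setIntegral_mul_le_of_ae_eq_zero {D A : Set α} {g b : α → ℝ} (hD : MeasurableSet D)
    (hAD : A ⊆ D) (hg₀ : 0 ≤ᵐ[μ.restrict D] g)
    (hb₀ : 0 ≤ᵐ[μ.restrict D] b) (hg : MemLp g 2 (μ.restrict D)) (hb : MemLp b 2 (μ.restrict D))
    (hgA : ∀ᵐ x ∂μ.restrict D, x ∉ A → g x = 0) :
    ∫ x in D, g x * b x ∂μ ≤ √(∫ x in D, g x ^ 2 ∂μ) * √(∫ x in A, b x ^ 2 ∂μ) := by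
  have hDA : μ.restrict A ≤ μ.restrict D := Measure.restrict_mono hAD le_rfl
  have hvanish : ∀ᵐ x ∂μ, x ∈ D \ A → g x * b x = 0 := by
    filter_upwards [(ae_restrict_iff' hD).1 hgA] with x hx hxDA
    rw [hx hxDA.1 hxDA.2, zero_mul]
  have hg_sq : ∫ x in A, g x ^ 2 ∂μ ≤ ∫ x in D, g x ^ 2 ∂μ :=
    setIntegral_mono_set hg.integrable_sq (Eventually.of_forall fun x => sq_nonneg (g x))
      hAD.eventuallyLE
  calc ∫ x in D, g x * b x ∂μ = ∫ x in A, g x * b x ∂μ :=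
        setIntegral_eq_of_subset_of_ae_sdiff_eq_zero hD.nullMeasurableSet hAD hvanish
    _ ≤ √(∫ x in A, g x ^ 2 ∂μ) * √(∫ x in A, b x ^ 2 ∂μ) :=
        integral_mul_le_sqrt_mul_sqrt (ae_mono hDA hg₀) (ae_mono hDA hb₀)
          (hg.mono_measure hDA) (hb.mono_measure hDA)
    _ ≤ √(∫ x in D, g x ^ 2 ∂μ) * √(∫ x in A, b x ^ 2 ∂μ) := by gcongr

theorem measure_sep_congr_ae {β : Type*} {D : Set α} (hD : MeasurableSet D) {f f' : α → β}
    (h : f =ᵐ[μ.restrict D] f') (p : β → Prop) :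
    μ {x ∈ D | p (f x)} = μ {x ∈ D | p (f' x)} := by
  change μ (D ∩ {x | p (f x)}) = μ (D ∩ {x | p (f' x)})
  rw [inter_comm, ← Measure.restrict_apply' hD, inter_comm, ← Measure.restrict_apply' hD]
  exact measure_congr (h.fun_comp p)

theorem measure_sep_le_eq_measure_sep_lt {D : Set α} {b : α → ℝ} {k : ℝ} (hD : μ D ≠ ∞)
    (hmeas : ∀ t, NullMeasurableSet {x ∈ D | b x < t} μ)
    (hφ : ContinuousAt (fun t => (μ {x ∈ D | b x < t}).toReal) k) :
    μ {x ∈ D | b x ≤ k} = μ {x ∈ D | b x < k} := by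
  have hfin_lt : ∀ t, μ {x ∈ D | b x < t} ≠ ∞ :=
    fun t => measure_ne_top_of_subset (sep_subset _ _) hD
  have hfin_le : μ {x ∈ D | b x ≤ k} ≠ ∞ := measure_ne_top_of_subset (sep_subset _ _) hD
  have hinter : ⋂ t > k, {x ∈ D | b x < t} = {x ∈ D | b x ≤ k} := by
    ext x
    simp only [mem_iInter, Set.mem_ofPred_eq]
    exact ⟨fun h => ⟨(h (k + 1) (by linarith)).1, le_of_forall_gt fun t ht => (h t ht).2⟩,
      fun h t ht => ⟨h.1, h.2.trans_lt ht⟩⟩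
  have hlim := tendsto_measure_biInter_gt (μ := μ) (a := k) (fun t _ => hmeas t)
    (fun i j _ hij x hx => ⟨hx.1, hx.2.trans_le hij⟩) ⟨k + 1, by linarith, hfin_lt _⟩
  rw [hinter] at hlim
  exact (ENNReal.toReal_eq_toReal_iff' hfin_le (hfin_lt k)).1 <|
    tendsto_nhds_unique ((ENNReal.tendsto_toReal hfin_le).comp hlim)
      (hφ.tendsto.mono_left nhdsWithin_le_nhds)

theorem exists_nonneg_measure_sep_le_eq {D : Set α} {b : α → ℝ} {m : ℝ} (hD : MeasurableSet D)
    (hD_fin : μ D ≠ ∞) (hmeas : ∀ t, NullMeasurableSet {x ∈ D | b x < t} μ)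
    (hb₀ : ∀ᵐ x ∂μ.restrict D, 0 ≤ b x) (hbdd : BddAbove (b '' D))
    (hφ : Continuous fun t => (μ {x ∈ D | b x < t}).toReal) (hm : 0 ≤ m)
    (hmD : ENNReal.ofReal m ≤ μ D) :
    ∃ k, 0 ≤ k ∧ μ {x ∈ D | b x ≤ k} = ENNReal.ofReal m := by
  obtain ⟨M, hM⟩ := hbdd
  have hφ_zero : (μ {x ∈ D | b x < 0}).toReal = 0 := by
    rw [measure_eq_zero_iff_ae_notMem.2, ENNReal.toReal_zero]
    filter_upwards [(ae_restrict_iff' hD).1 hb₀] with x hx ⟨hxD, hneg⟩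
    exact (hx hxD).not_gt hneg
  have hφ_top : (μ {x ∈ D | b x < max M 0 + 1}).toReal = (μ D).toReal := by
    rw [sep_eq_self_iff_mem_true.2 fun x hx =>
      (hM (mem_image_of_mem b hx)).trans_lt (by linarith [le_max_left M 0])]
  have hm_mem : m ∈ Icc (μ {x ∈ D | b x < 0}).toReal (μ {x ∈ D | b x < max M 0 + 1}).toReal := by
    rw [hφ_zero, hφ_top]
    exact ⟨hm, (ENNReal.ofReal_le_iff_le_toReal hD_fin).1 hmD⟩
  obtain ⟨k, ⟨hk₀, -⟩, hk⟩ :=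
    intermediate_value_Icc (by positivity) hφ.continuousOn hm_mem
  refine ⟨k, hk₀, ?_⟩
  rw [measure_sep_le_eq_measure_sep_lt hD_fin hmeas hφ.continuousAt, ← hk,
    ENNReal.ofReal_toReal (measure_ne_top_of_subset (sep_subset _ _) hD_fin)]

theorem measure_sep_lt_eq_sub {D : Set α} {b : α → ℝ} {k : ℝ}
    (hmeas : NullMeasurableSet {x ∈ D | b x ≤ k} μ) (hD : μ D ≠ ∞) :
    μ {x ∈ D | k < b x} = μ D - μ {x ∈ D | b x ≤ k} := by
  have hsplit : {x ∈ D | k < b x} = D \ {x ∈ D | b x ≤ k} := by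
    ext x
    simp only [Set.mem_ofPred_eq, Set.mem_sdiff, not_and, not_le]
    exact ⟨fun h => ⟨h.1, fun _ => h.2⟩, fun h => ⟨h.1, h.2 h.1⟩⟩
  rw [hsplit, measure_sdiff (sep_subset _ _) hmeas (measure_ne_top_of_subset (sep_subset _ _) hD)]

theorem setIntegral_sq_pos {s : Set α} {f : α → ℝ} (hf : IntegrableOn (fun x => f x ^ 2) s μ)
    (hs : 0 < μ s) (hne : ∀ x ∈ s, f x ≠ 0) : 0 < ∫ x in s, f x ^ 2 ∂μ := by
  rw [setIntegral_pos_iff_support_of_nonneg_ae (ae_of_all _ fun x => sq_nonneg (f x)) hf]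
  exact hs.trans_le (measure_mono fun x hx => ⟨pow_ne_zero 2 (hne x hx), hx⟩)

end MeasureTheory

theorem ContinuousOn.measurableSet_sep_mem {α β : Type*} [MeasurableSpace α] [TopologicalSpace α]
    [OpensMeasurableSpace α] [TopologicalSpace β] [MeasurableSpace β] [BorelSpace β]
    {D : Set α} {b : α → β} (hD : MeasurableSet D) (hb : ContinuousOn b D) {t : Set β}
    (ht : MeasurableSet t) : MeasurableSet {x ∈ D | b x ∈ t} := by
  convert hD.subtype_image (hb.domRestrict.measurable ht) using 1
  ext x
  simp [and_comm]

theorem ContinuousOn.memLp_of_isCompact {X E : Type*} [TopologicalSpace X] [MeasurableSpace X]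
    [OpensMeasurableSpace X] [T2Space X] [NormedAddCommGroup E]
    [SecondCountableTopologyEither X E] {μ : Measure X} [IsFiniteMeasureOnCompacts μ]
    {s : Set X} {f : X → E} (hs : IsCompact s) (hf : ContinuousOn f s) (p : ℝ≥0∞) :
    MemLp f p (μ.restrict s) := by
  have : IsFiniteMeasure (μ.restrict s) := isFiniteMeasure_restrict.2 hs.measure_lt_top.ne
  obtain ⟨C, hC⟩ := hs.exists_bound_of_continuousOn hf
  exact MemLp.of_bound (hf.aestronglyMeasurable hs.measurableSet) C
    ((ae_restrict_iff' hs.measurableSet).2 (ae_of_all _ hC))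

section SparseClustering

variable {D : Set ℝ} {b : ℝ → ℝ} {k m : ℝ}

theorem Bf_subset : Bf D b k ⊆ D := sep_subset _ _

theorem wstarF_nonneg (hk : 0 ≤ k) (x : ℝ) : 0 ≤ wstarF D b k x :=
  indicator_nonneg (fun _ hy => div_nonneg (hk.trans hy.2.le) (Real.sqrt_nonneg _)) x

theorem integral_wstarF_mul (hB : MeasurableSet (Bf D b k)) :
    ∫ x in D, wstarF D b k x * b x = √(∫ x in Bf D b k, b x ^ 2) := by
  simp_rw [wstarF, ← indicator_mul_left]
  rw [setIntegral_indicator hB, inter_eq_self_of_subset_right Bf_subset]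
  simp_rw [div_mul_eq_mul_div, ← sq]
  rw [integral_div, Real.div_sqrt]

theorem integral_wstarF_sq (hB : MeasurableSet (Bf D b k))
    (hI : 0 < ∫ x in Bf D b k, b x ^ 2) : ∫ x in D, wstarF D b k x ^ 2 = 1 := by
  unfold wstarF
  set N := √(∫ x in Bf D b k, b x ^ 2) with hN
  simp_rw [sq, ← indicator_mul]
  rw [setIntegral_indicator hB, inter_eq_self_of_subset_right Bf_subset]
  simp_rw [div_mul_div_comm, ← sq]
  rw [integral_div, hN, Real.sq_sqrt hI.le, div_self hI.ne']

theorem feasibleF_wstarF (hB : MeasurableSet (Bf D b k)) (hk : 0 ≤ k)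
    (hb : MemLp b 2 (volume.restrict D)) (hI : 0 < ∫ x in Bf D b k, b x ^ 2)
    (hm : ENNReal.ofReal m ≤ volume {x ∈ D | b x ≤ k}) : FeasibleF D m (wstarF D b k) := by
  refine ⟨?_, (integral_wstarF_sq hB hI).le, ae_of_all _ (wstarF_nonneg hk), ?_⟩
  · simpa only [wstarF, div_eq_mul_inv] using (hb.mul_const _).indicator hB
  · exact hm.trans (measure_mono fun x hx =>
      ⟨hx.1, indicator_of_notMem (fun h => h.2.not_ge hx.2) _⟩)

theorem setIntegral_sq_le_setIntegral_sq_Bf {A : Set ℝ} (hA : MeasurableSet A) (hAD : A ⊆ D)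
    (hD_fin : volume D ≠ ∞) (hb_sq : IntegrableOn (fun x => b x ^ 2) D)
    (hb₀ : ∀ᵐ x ∂volume.restrict D, 0 ≤ b x) (hk : 0 ≤ k) (hB : MeasurableSet (Bf D b k))
    (hAB : volume A ≤ volume (Bf D b k)) :
    ∫ x in A, b x ^ 2 ≤ ∫ x in Bf D b k, b x ^ 2 := by
  have hle : ∀ᵐ x ∂volume.restrict (A \ Bf D b k), b x ^ 2 ≤ k ^ 2 := by
    filter_upwards [ae_restrict_of_ae_restrict_of_subset (sdiff_subset.trans hAD) hb₀,
      ae_restrict_mem (hA.diff hB)] with x hx₀ hx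
    exact pow_le_pow_left₀ hx₀ (not_lt.1 fun h => hx.2 ⟨hAD hx.1, h⟩) 2
  have hge : ∀ᵐ x ∂volume.restrict (Bf D b k \ A), k ^ 2 ≤ b x ^ 2 :=
    ae_restrict_of_forall_mem (hB.diff hA) fun x hx => pow_le_pow_left₀ hk hx.1.2.le 2
  exact setIntegral_le_setIntegral_of_measure_le hA hB (measure_ne_top_of_subset Bf_subset hD_fin)
    hAB (hb_sq.mono_set hAD) (hb_sq.mono_set Bf_subset) (sq_nonneg k) hle hge

theorem integral_mul_le_of_feasibleF (hD : MeasurableSet D) (hD_fin : volume D ≠ ∞)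
    (hb : MemLp b 2 (volume.restrict D)) (hb₀ : ∀ᵐ x ∂volume.restrict D, 0 ≤ b x) (hk : 0 ≤ k)
    (hB : MeasurableSet (Bf D b k)) (hB_vol : volume D - ENNReal.ofReal m ≤ volume (Bf D b k))
    {g : ℝ → ℝ} (hg : FeasibleF D m g) :
    ∫ x in D, g x * b x ≤ √(∫ x in Bf D b k, b x ^ 2) := by
  obtain ⟨hg_L2, hg_sq, hg₀, hg_zero⟩ := hg
  -- `g` is only a.e. strongly measurable; the zero set of a measurable version is measurable
  set g' := hg_L2.1.mk g
  have hgg' : g =ᵐ[volume.restrict D] g' := hg_L2.1.ae_eq_mk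
  set Z := {x ∈ D | g' x = 0}
  have hZ : MeasurableSet Z :=
    hD.inter (hg_L2.1.stronglyMeasurable_mk.measurable (measurableSet_singleton 0))
  have hsupp : ∀ᵐ x ∂volume.restrict D, x ∉ D \ Z → g x = 0 := by
    filter_upwards [hgg', ae_restrict_mem hD] with x hx hxD hxZ
    rw [hx]
    by_contra h
    exact hxZ ⟨hxD, fun hZx => h hZx.2⟩
  have hsupp_vol : volume (D \ Z) ≤ volume (Bf D b k) :=
    calc volume (D \ Z) = volume D - volume Z :=
          measure_sdiff (sep_subset _ _) hZ.nullMeasurableSet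
            (measure_ne_top_of_subset (sep_subset _ _) hD_fin)
      _ ≤ volume D - ENNReal.ofReal m :=
          tsub_le_tsub_left (hg_zero.trans (measure_sep_congr_ae hD hgg' (· = 0)).le) _
      _ ≤ volume (Bf D b k) := hB_vol
  calc ∫ x in D, g x * b x ≤ √(∫ x in D, g x ^ 2) * √(∫ x in D \ Z, b x ^ 2) :=
        setIntegral_mul_le_of_ae_eq_zero hD sdiff_subset hg₀ hb₀ hg_L2 hb hsupp
    _ ≤ 1 * √(∫ x in Bf D b k, b x ^ 2) :=
        mul_le_mul (Real.sqrt_le_one.2 hg_sq) (Real.sqrt_le_sqrt <|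
          setIntegral_sq_le_setIntegral_sq_Bf (hD.diff hZ) sdiff_subset hD_fin hb.integrable_sq
            hb₀ hk hB hsupp_vol) (Real.sqrt_nonneg _) zero_le_one
    _ = √(∫ x in Bf D b k, b x ^ 2) := one_mul _

end SparseClustering

theorem functional_sparse_clustering_existence_general (D : Set ℝ) (hD : IsCompact D)
    (m : ℝ) (b : ℝ → ℝ)
    (hm : 0 < m) (hmD : ENNReal.ofReal m < volume D)
    (hb : ContinuousOn b D)
    (hbpos : ∀ᵐ x ∂(volume.restrict D), 0 ≤ b x)
    (hphi : Continuous fun t : ℝ => (volume {x ∈ D | b x < t}).toReal) :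
    ∃ k : ℝ, 0 ≤ k ∧
      volume (Bf D b k) = volume D - ENNReal.ofReal m ∧
      FeasibleF D m (wstarF D b k) ∧
      ∀ g : ℝ → ℝ, FeasibleF D m g →
        (∫ x in D, g x * b x) ≤ ∫ x in D, wstarF D b k x * b x := by
  have hD_meas := hD.measurableSet
  have hD_fin : volume D ≠ ∞ := hD.measure_lt_top.ne
  have hsep : ∀ t : Set ℝ, MeasurableSet t → MeasurableSet {x ∈ D | b x ∈ t} :=
    fun t ht => hb.measurableSet_sep_mem hD_meas ht
  have hb_L2 : MemLp b 2 (volume.restrict D) := hb.memLp_of_isCompact (μ := volume) hD 2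
  obtain ⟨k, hk₀, hk⟩ := exists_nonneg_measure_sep_le_eq hD_meas hD_fin
    (fun t => (hsep _ measurableSet_Iio).nullMeasurableSet) hbpos (hD.bddAbove_image hb) hphi
    hm.le hmD.le
  have hB : MeasurableSet (Bf D b k) := hsep _ measurableSet_Ioi
  have hB_vol : volume (Bf D b k) = volume D - ENNReal.ofReal m := by
    rw [← hk]
    exact measure_sep_lt_eq_sub (hsep _ measurableSet_Iic).nullMeasurableSet hD_fin
  have hI : 0 < ∫ x in Bf D b k, b x ^ 2 :=
    setIntegral_sq_pos (IntegrableOn.mono_set hb_L2.integrable_sq Bf_subset)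
      (hB_vol ▸ tsub_pos_of_lt hmD) fun x hx => (hk₀.trans_lt hx.2).ne'
  refine ⟨k, hk₀, hB_vol, feasibleF_wstarF hB hk₀ hb_L2 hI hk.ge, fun g hg => ?_⟩
  rw [integral_wstarF_mul hB]
  exact integral_mul_le_of_feasibleF hD_meas hD_fin hb_L2 hbpos hk₀ hB hB_vol.ge hg

/-- Existence of a solution to functional sparse clustering: if the distribution
function `φ(t) = μ({x ∈ D : b(x) < t})` is continuous, then there is `k ≥ 0` with
`μ({x ∈ D : b(x) > k}) = μ(D) − m` such that `w* = (b/‖b‖_{L²(B)}) 1_B` is feasible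
and maximizes `∫_D w b dμ` over all feasible `w`. -/
theorem functional_sparse_clustering_existence (D : Set ℝ) (hD : IsCompact D)
    (m : ℝ) (b : ℝ → ℝ)
    (hm : 0 < m) (hmD : ENNReal.ofReal m < volume D) (hDfin : volume D < ⊤)
    (hb : ContinuousOn b D)
    (hbpos : ∀ᵐ x ∂(volume.restrict D), 0 ≤ b x)
    (hphi : Continuous fun t : ℝ => (volume {x ∈ D | b x < t}).toReal) :
    ∃ k : ℝ, 0 ≤ k ∧
      volume (Bf D b k) = volume D - ENNReal.ofReal m ∧
      FeasibleF D m (wstarF D b k) ∧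
      ∀ g : ℝ → ℝ, FeasibleF D m g →
        (∫ x in D, g x * b x) ≤ ∫ x in D, wstarF D b k x * b x :=
  functional_sparse_clustering_existence_general D hD m b hm hmD hb hbpos hphi
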